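/- Let n ≥ 1. For every j ∈ ℕ and every x ∈ [0,1] one has Φ_{n,j}(x) = Φ_{n,j}(1−x). -/

import Mathlib

/-! Reflecting `x ↦ 1 - x` sends the sample points `(x + k) / 2^n`, `k < 2^n`, of `Φ_{n,j+1}` to
the points `1 - (x + k') / 2^n` with `k' = 2^n - 1 - k`, and every factor
`|cos (2^j α π + γ_j π / 2)|` of `Π_{r,γ}` is invariant under `α ↦ 1 - α` because `2^j` is an
integer, so induction on `j` closes the argument. -/

open Real

noncomputable section

/-- The perturbing sequence: `c j = 1` if `n ∣ j`, else `0`. -/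
def pert (n j : ℕ) : ℕ := if n ∣ j then 1 else 0

/-- The lacunary trigonometric product `Π_{r,γ}(α) = ∏_{j<r} |cos(2^j α π + γ_j π/2)|`. -/
def PiProd (r : ℕ) (γ : ℕ → ℕ) (α : ℝ) : ℝ :=
  ∏ j ∈ Finset.range r, |Real.cos (2 ^ j * α * π + γ j * π / 2)|

/-- The functions `Φ_{n,j}` defined recursively by `Φ_{n,0} = 1` and
`Φ_{n,j+1}(x) = 2^{-n} Σ_{k<2^n} Π_{n,c}((x+k)/2^n) · Φ_{n,j}((x+k)/2^n)`. -/
def Phi (n : ℕ) : ℕ → ℝ → ℝ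
  | 0, _ => 1
  | j + 1, x => ((2:ℝ) ^ n)⁻¹ * ∑ k ∈ Finset.range (2 ^ n),
      PiProd n (pert n) ((x + k) / 2 ^ n) * Phi n j ((x + k) / 2 ^ n)

lemma abs_cos_nat_mul_pi_sub_add (m g : ℕ) (θ : ℝ) :
    |cos (m * π - θ + g * π / 2)| = |cos (θ + g * π / 2)| := by
  have h : (m : ℝ) * π - θ + g * π / 2 = ((m + g : ℕ) : ℝ) * π - (θ + g * π / 2) := by
    push_cast; ring
  rw [h, cos_nat_mul_pi_sub, abs_mul, abs_pow, abs_neg, abs_one, one_pow, one_mul]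

lemma PiProd_one_sub (r : ℕ) (γ : ℕ → ℕ) (y : ℝ) : PiProd r γ (1 - y) = PiProd r γ y := by
  refine Finset.prod_congr rfl fun j _ => ?_
  have h : (2 : ℝ) ^ j * (1 - y) * π = ((2 ^ j : ℕ) : ℝ) * π - 2 ^ j * y * π := by
    push_cast; ring
  rw [h, abs_cos_nat_mul_pi_sub_add]

lemma Finset.sum_range_one_sub_div {M : Type*} [AddCommMonoid M] (f : ℝ → M) (N : ℕ) (x : ℝ) :
    ∑ k ∈ Finset.range N, f ((1 - x + k) / N) = ∑ k ∈ Finset.range N, f (1 - (x + k) / N) := by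
  rw [← Finset.sum_range_reflect]
  refine Finset.sum_congr rfl fun k hk => ?_
  have hk : k + 1 ≤ N := Finset.mem_range.mp hk
  have hN : (N : ℝ) ≠ 0 := by exact_mod_cast (by omega : N ≠ 0)
  congr 1
  rw [Nat.sub_sub, Nat.cast_sub (by omega)]
  field_simp
  push_cast
  ring

lemma Phi_one_sub (n j : ℕ) (x : ℝ) : Phi n j (1 - x) = Phi n j x := by
  induction j generalizing x with
  | zero => rfl
  | succ j ih =>
    have reflect := Finset.sum_range_one_sub_div
      (fun y => PiProd n (pert n) y * Phi n j y) (2 ^ n) x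
    push_cast at reflect
    simp only [Phi, reflect, PiProd_one_sub, ih]

theorem Phi_symm_general (n : ℕ) (j : ℕ) (x : ℝ) :
    Phi n j x = Phi n j (1 - x) :=
  (Phi_one_sub n j x).symm

/-- Symmetry: `Φ_{n,j}(x) = Φ_{n,j}(1-x)` for all `x ∈ [0,1]`. -/
theorem Phi_symm (n : ℕ) (hn : 1 ≤ n) (j : ℕ) (x : ℝ) (hx : x ∈ Set.Icc (0:ℝ) 1) :
    Phi n j x = Phi n j (1 - x) :=
  Phi_symm_general n j x

end
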